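/- arXiv:2106.11560 — 2 statements merged into one kernel-verified Lean document; each statement's English description precedes it below -/
import Mathlib

section
/- Let G be a semi-Markovian DAG satisfying Assumption 1. Let x_t ∈ X^(o) be a node with a directed edge x_t → t, and let Z ⊆ X^(o) \ {x_t}. If there exists a path between x_t and y in G that is not blocked by Z ∪ {t}, then there exists a path between t and y in G not containing the edge t → y that is not blocked by Z; equivalently, t and y are not d-separated by Z in G_{-t} (the graph obtained from G by deleting the edge t → y), so Z does not satisfy the back-door criterion relative to (t, y) in G. -/
namespace CausalDAG

variable {V : Type*}

/-- Adjacency: an edge between `u` and `v` in either direction. -/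
def Adj (E : V → V → Prop) (u v : V) : Prop := E u v ∨ E v u

/-- `d` is a descendant of `v`: there is a directed path from `v` to `d`. -/
def Descendant (E : V → V → Prop) (v d : V) : Prop := Relation.TransGen E v d

/-- The directed graph with edge relation `E` is acyclic. -/
def Acyclic (E : V → V → Prop) : Prop := ∀ v, ¬ Relation.TransGen E v v

/-- A path between `a` and `b` in the graph with edge relation `E`:
a sequence of at least two distinct nodes, starting at `a`, ending at `b`,
with consecutive nodes joined by an edge (in either direction). -/
structure GPath (E : V → V → Prop) (a b : V) where
  nodes : List V
  nodup : nodes.Nodup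
  two_le : 2 ≤ nodes.length
  head_eq : nodes.head? = some a
  last_eq : nodes.getLast? = some b
  chain : nodes.Chain' (Adj E)

namespace GPath

variable {E : V → V → Prop} {a b : V}

/-- `i` is an interior position of the path. -/
def Interior (p : GPath E a b) (i : ℕ) : Prop := 0 < i ∧ i + 1 < p.nodes.length

/-- The node at interior position `i` is a collider on the path: both adjacent
edges of the path point into it. -/
def ColliderAt (p : GPath E a b) (i : ℕ) : Prop :=
  ∃ x v z, p.nodes[i - 1]? = some x ∧ p.nodes[i]? = some v ∧
    p.nodes[i + 1]? = some z ∧ E x v ∧ E z v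

/-- The path is blocked by the set `S`. -/
def BlockedBy (p : GPath E a b) (S : Set V) : Prop :=
  ∃ i v, p.Interior i ∧ p.nodes[i]? = some v ∧
    ((¬ p.ColliderAt i ∧ v ∈ S) ∨
      (p.ColliderAt i ∧ v ∉ S ∧ ∀ d, Descendant E v d → d ∉ S))

/-- The path contains the directed edge `u → v` as one of its steps. -/
def UsesEdge (p : GPath E a b) (u v : V) : Prop :=
  E u v ∧ ∃ i, (p.nodes[i]? = some u ∧ p.nodes[i + 1]? = some v) ∨
    (p.nodes[i]? = some v ∧ p.nodes[i + 1]? = some u)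

/-- The path contains an edge pointing into its first endpoint. -/
def IntoFirst (p : GPath E a b) : Prop :=
  ∃ w, p.nodes[1]? = some w ∧ E w a

end GPath

/-- `a` and `b` are d-separated by `S`: every path between them is blocked by `S`. -/
def DSep (E : V → V → Prop) (a b : V) (S : Set V) : Prop :=
  ∀ p : GPath E a b, p.BlockedBy S

/-- `Z` satisfies the back-door criterion relative to `(t, y)`: no node of `Z` is a
descendant of `t`, and `Z` blocks every path between `t` and `y` containing an edge
pointing into `t`. -/
def BackDoor (E : V → V → Prop) (t y : V) (Z : Set V) : Prop :=
  (∀ z ∈ Z, ¬ Descendant E t z) ∧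
  ∀ p : GPath E t y, p.IntoFirst → p.BlockedBy Z

/-- A semi-Markovian DAG: observed features `Xo`, unobserved features `Xu`,
treatment `t`, outcome `y`; unobserved nodes have no parents and at most two
children. -/
structure SemiMarkov (V : Type*) where
  E : V → V → Prop
  Xo : Set V
  Xu : Set V
  t : V
  y : V
  acyclic : Acyclic E
  t_ne_y : t ≠ y
  t_notin : t ∉ Xo ∪ Xu
  y_notin : y ∉ Xo ∪ Xu
  disjoint : Disjoint Xo Xu
  cover : ∀ v, v ∈ Xo ∨ v ∈ Xu ∨ v = t ∨ v = y
  unobs_no_parents : ∀ u ∈ Xu, ∀ w, ¬ E w u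
  unobs_children : ∀ u ∈ Xu, ∃ a b, ∀ c, E u c → c = a ∨ c = b

/-- Assumption 1: `y` is the only child of `t`, and `y` has no children. -/
def Assumption1 (M : SemiMarkov V) : Prop :=
  M.E M.t M.y ∧ (∀ w, M.E M.t w → w = M.y) ∧ ∀ w, ¬ M.E M.y w

/-- Edge relation of the sub-sampled graph `G_e`: a new node `e` (represented by
`none`) is added, together with the edge `x_t → e` and an edge `v → e` for each
`v ∈ V0`. -/
def subEdge (E : V → V → Prop) (xt : V) (V0 : Set V) :
    Option V → Option V → Prop
  | some u, some v => E u v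
  | some u, none => u = xt ∨ u ∈ V0
  | none, _ => False

end CausalDAG

/-!
Let `p` be a path from `x_t` to `y` that is active given `Z ∪ {t}`. An interior node of `p` that
is `t` itself, or a collider active only because `t` is among its descendants, is followed on `p`
by a suffix starting at a node with a directed path to `t` outside `Z` (the node after `t`, resp.
the collider). Passing to such suffixes as long as possible leaves a path `S` to `y`, active given
`Z` and avoiding `t`, whose first node reaches `t` by a directed path outside `Z` (initially the
edge `x_t → t`). Splicing the reversed directed path onto `S` gives a back-door path from `t` to
`y` active given `Z`. Since `y` has no children it cannot use the edge `t → y`, and since `y ∉ Z`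
it stays active after that edge is deleted.
-/

namespace CausalDAG

open Relation

variable {V : Type*} {E : V → V → Prop}

theorem Acyclic.ne_of_transGen (hE : Acyclic E) {a b : V} (h : TransGen E a b) : a ≠ b := by
  rintro rfl
  exact hE a h

theorem Acyclic.asymm (hE : Acyclic E) {a b : V} (h : E a b) : ¬ E b a :=
  fun h' => hE a (.head h (.single h'))

theorem not_transGen_of_childless {y : V} (hy : ∀ w, ¬ E y w) (a : V) : ¬ TransGen E y a := by
  intro h
  obtain ⟨c, hc, -⟩ := TransGen.head'_iff.1 h
  exact hy c hc

def ActiveTriple (E : V → V → Prop) (S : Set V) (x v z : V) : Prop :=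
  (E x v ∧ E z v ∧ ∃ d ∈ S, ReflTransGen E v d) ∨ (¬ (E x v ∧ E z v) ∧ v ∉ S)

def ActiveList (E : V → V → Prop) (S : Set V) (l : List V) : Prop :=
  ∀ i (h : i + 2 < l.length), ActiveTriple E S l[i] l[i + 1] l[i + 2]

section ActiveTriple

variable {S : Set V} {x v z : V}

theorem ActiveTriple.not_mem_of_not_edge (h : ActiveTriple E S x v z) (hxv : ¬ E x v) :
    v ∉ S := by
  rcases h with ⟨hx, -⟩ | ⟨-, hv⟩
  exacts [absurd hx hxv, hv]

theorem ActiveTriple.collider_of_mem (h : ActiveTriple E S x v z) (hv : v ∈ S) :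
    E x v ∧ E z v := by
  rcases h with ⟨hx, hz, -⟩ | ⟨-, hv'⟩
  exacts [⟨hx, hz⟩, absurd hv hv']

theorem transGen_avoiding_of_forall_not_mem {t : V} (h : TransGen E v t)
    (hS : ∀ d, ReflTransGen E v d → d ∉ S) : TransGen (fun a b => E a b ∧ a ∉ S) v t := by
  induction h with
  | single hvb => exact .single ⟨hvb, hS v .refl⟩
  | tail hva hab ih => exact .tail ih ⟨hab, hS _ hva.to_reflTransGen⟩

theorem ActiveTriple.of_union_singleton {t : V} (h : ActiveTriple E (S ∪ {t}) x v z)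
    (hvt : v ≠ t) :
    ActiveTriple E S x v z ∨ E x v ∧ E z v ∧ TransGen (fun a b => E a b ∧ a ∉ S) v t := by
  rcases h with ⟨hx, hz, d, hd, hvd⟩ | ⟨hC, hv⟩
  · by_cases hS : ∃ d ∈ S, ReflTransGen E v d
    · exact .inl (.inl ⟨hx, hz, hS⟩)
    push Not at hS
    have hdt : d = t := hd.resolve_left fun hdS => hS d hdS hvd
    subst hdt
    have hvd' := (reflTransGen_iff_eq_or_transGen.1 hvd).resolve_left hvt.symm
    exact .inr ⟨hx, hz, transGen_avoiding_of_forall_not_mem hvd' fun d hd hdS => hS d hdS hd⟩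
  · exact .inl (.inr ⟨hC, fun hvS => hv (.inl hvS)⟩)

end ActiveTriple

namespace ActiveList

variable {S : Set V}

theorem drop {l : List V} (h : ActiveList E S l) (k : ℕ) : ActiveList E S (l.drop k) := by
  intro i hi
  simp only [List.length_drop] at hi
  simpa only [List.getElem_drop, Nat.add_assoc] using h (k + i) (by omega)

theorem cons {l : List V} {s u : V} (h : ActiveList E S l) (hl : l.head? = some s)
    (hsu : E s u) (hus : ¬ E u s) (hs : s ∉ S) : ActiveList E S (u :: l) := by
  cases l with
  | nil => simp at hl
  | cons s' l =>
    obtain rfl : s' = s := by simpa using hl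
    rintro (_ | i) hi
    · exact .inr ⟨fun h => hus h.1, hs⟩
    · exact h i (by simp at hi ⊢; omega)

end ActiveList

/-- The graph `G₋ₜ` of the paper when `u = t` and `w = y`. -/
def deleteEdge (E : V → V → Prop) (u w : V) : V → V → Prop :=
  fun a b => E a b ∧ ¬ (a = u ∧ b = w)

section DeleteEdge

variable {u y : V} (hy : ∀ w, ¬ E y w)
include hy

theorem reflTransGen_deleteEdge {v d : V} (h : ReflTransGen E v d) (hd : d ≠ y) :
    ReflTransGen (deleteEdge E u y) v d := by
  induction h with
  | refl => exact .refl
  | tail _ hab ih =>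
    exact (ih fun hay => hy _ (hay ▸ hab)).tail ⟨hab, fun h => hd h.2⟩

theorem ActiveTriple.deleteEdge {S : Set V} {x v z : V} (h : ActiveTriple E S x v z) (hv : v ≠ y)
    (hyS : y ∉ S) : ActiveTriple (deleteEdge E u y) S x v z := by
  have edge_iff : ∀ c, CausalDAG.deleteEdge E u y c v ↔ E c v :=
    fun c => ⟨And.left, fun h => ⟨h, fun h' => hv h'.2⟩⟩
  simp only [ActiveTriple, edge_iff]
  rcases h with ⟨hx, hz, d, hd, hvd⟩ | h
  · exact .inl ⟨hx, hz, d, hd, reflTransGen_deleteEdge hy hvd fun hdy => hyS (hdy ▸ hd)⟩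
  · exact .inr h

end DeleteEdge

namespace GPath

variable {a b : V} (p : GPath E a b)

theorem length_pos : 0 < p.nodes.length := by
  have := p.two_le
  omega

theorem getElem_zero : p.nodes[0]'p.length_pos = a := by
  simpa [List.head?_eq_getElem?, p.length_pos] using p.head_eq

theorem getElem_length_sub_one : p.nodes[p.nodes.length - 1]'(by have := p.two_le; omega) = b := by
  simpa [List.getLast?_eq_getElem?, p.length_pos] using p.last_eq

theorem succ_lt_length_of_getElem_ne {k : ℕ} (hk : k < p.nodes.length) (h : p.nodes[k] ≠ b) :
    k + 1 < p.nodes.length := by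
  by_contra hlt
  obtain rfl : k = p.nodes.length - 1 := by omega
  exact h p.getElem_length_sub_one

theorem getElem_ne_of_succ_lt {k : ℕ} (hk : k + 1 < p.nodes.length) : p.nodes[k] ≠ b := by
  intro h
  have := (p.nodup.getElem_inj_iff).1 (h.trans p.getElem_length_sub_one.symm)
  omega

def drop (k : ℕ) (hk : k + 1 < p.nodes.length) : GPath E p.nodes[k] b where
  nodes := p.nodes.drop k
  nodup := p.nodup.sublist (List.drop_sublist _ _)
  two_le := by simp only [List.length_drop]; omega
  head_eq := by simp [List.head?_drop]
  last_eq := by simp [List.getLast?_drop, show ¬ p.nodes.length ≤ k by omega, p.last_eq]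
  chain := List.IsChain.drop p.chain k

def cons (u : V) (hu : u ∉ p.nodes) (h : Adj E u a) : GPath E u b where
  nodes := u :: p.nodes
  nodup := List.nodup_cons.2 ⟨hu, p.nodup⟩
  two_le := by simp only [List.length_cons]; have := p.two_le; omega
  head_eq := rfl
  last_eq := by simp [List.getLast?_cons, p.last_eq]
  chain := List.isChain_cons.2 ⟨by simpa [p.head_eq] using h, p.chain⟩

theorem colliderAt_succ_iff {i : ℕ} (hi : i + 2 < p.nodes.length) :
    p.ColliderAt (i + 1) ↔ E p.nodes[i] p.nodes[i + 1] ∧ E p.nodes[i + 2] p.nodes[i + 1] := by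
  simp [ColliderAt, List.getElem?_eq_getElem hi,
    List.getElem?_eq_getElem (by omega : i < p.nodes.length),
    List.getElem?_eq_getElem (by omega : i + 1 < p.nodes.length)]

theorem not_blockedBy_iff (S : Set V) : ¬ p.BlockedBy S ↔ ActiveList E S p.nodes := by
  have blocked_at : ∀ i (hi : i + 2 < p.nodes.length),
      (∃ v, p.nodes[i + 1]? = some v ∧ ((¬ p.ColliderAt (i + 1) ∧ v ∈ S) ∨
        (p.ColliderAt (i + 1) ∧ v ∉ S ∧ ∀ d, Descendant E v d → d ∉ S))) ↔
      ¬ ActiveTriple E S p.nodes[i] p.nodes[i + 1] p.nodes[i + 2] := by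
    intro i hi
    simp only [List.getElem?_eq_getElem (by omega : i + 1 < p.nodes.length), Option.some.injEq,
      exists_eq_left', p.colliderAt_succ_iff hi, ActiveTriple, Descendant,
      reflTransGen_iff_eq_or_transGen]
    grind
  constructor
  · intro h i hi
    by_contra hna
    obtain ⟨v, hv, hb⟩ := (blocked_at i hi).2 hna
    exact h ⟨i + 1, v, ⟨by omega, by omega⟩, hv, hb⟩
  · rintro h ⟨_ | i, v, ⟨hi0, hi⟩, hv, hb⟩
    · omega
    · exact (blocked_at i (by omega)).1 ⟨v, hv, hb⟩ (h i (by omega))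

theorem not_usesEdge_of_intoFirst (hp : p.IntoFirst) {y : V} (hy : ∀ w, ¬ E y w) :
    ¬ p.UsesEdge a y := by
  obtain ⟨w, hw, hwa⟩ := hp
  have ha : p.nodes[0]? = some a := by rw [← List.head?_eq_getElem?, p.head_eq]
  have index_a : ∀ {i}, p.nodes[i]? = some a → i = 0 := fun hi =>
    ((List.getElem?_inj p.length_pos p.nodup).1 (ha.trans hi.symm)).symm
  rintro ⟨-, i, ⟨hi, hi'⟩ | ⟨-, hi'⟩⟩
  · obtain rfl := index_a hi
    obtain rfl : w = y := Option.some.inj (hw.symm.trans hi')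
    exact hy a hwa
  · exact absurd (index_a hi') (Nat.succ_ne_zero i)

def toDeleteEdge {u w : V} (hp : ¬ p.UsesEdge u w) : GPath (deleteEdge E u w) a b where
  nodes := p.nodes
  nodup := p.nodup
  two_le := p.two_le
  head_eq := p.head_eq
  last_eq := p.last_eq
  chain := by
    refine List.isChain_iff_getElem.2 fun i hi => ?_
    have hi' : i < p.nodes.length := by omega
    rcases List.isChain_iff_getElem.1 p.chain i hi with h | h
    · refine .inl ⟨h, ?_⟩
      rintro ⟨hu, hw⟩
      exact hp ⟨hu ▸ hw ▸ h, i, .inl ⟨List.getElem?_eq_some_iff.2 ⟨hi', hu⟩,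
        List.getElem?_eq_some_iff.2 ⟨hi, hw⟩⟩⟩
    · refine .inr ⟨h, ?_⟩
      rintro ⟨hu, hw⟩
      exact hp ⟨hu ▸ hw ▸ h, i, .inr ⟨List.getElem?_eq_some_iff.2 ⟨hi', hw⟩,
        List.getElem?_eq_some_iff.2 ⟨hi, hu⟩⟩⟩

theorem activeList_toDeleteEdge {u y : V} (hy : ∀ w, ¬ E y w) {S : Set V} (hyS : y ∉ S)
    (p : GPath E a y) (hp : ¬ p.UsesEdge u y) (hact : ActiveList E S p.nodes) :
    ActiveList (deleteEdge E u y) S (p.toDeleteEdge hp).nodes := fun i hi =>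
  have hi' : i + 2 < p.nodes.length := hi
  ActiveTriple.deleteEdge hy (hact i hi) (p.getElem_ne_of_succ_lt (by omega)) hyS

end GPath

section BackDoorPath

variable (hE : Acyclic E) {y : V} (hy : ∀ w, ¬ E y w) {S : Set V}
include hE hy

theorem exists_intoFirst_activeList {s t : V}
    (hst : TransGen (fun a b => E a b ∧ a ∉ S) s t) (p : GPath E s y) (htp : t ∉ p.nodes)
    (hp : ActiveList E S p.nodes) :
    ∃ q : GPath E t y, q.IntoFirst ∧ ActiveList E S q.nodes := by
  -- Prepend the nodes of the directed path to `p`, cutting `p` short when the path re-enters it.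
  induction hst using TransGen.head_induction_on with
  | single h =>
    refine ⟨p.cons _ htp (.inr h.1), ⟨_, ?_, h.1⟩,
      hp.cons p.head_eq h.1 (hE.asymm h.1) h.2⟩
    simp [GPath.cons, ← p.head_eq, List.head?_eq_getElem?]
  | @head s s₁ h hs₁t ih =>
    have hs₁t' : TransGen E s₁ t := TransGen.mono (fun _ _ h => h.1) _ _ hs₁t
    by_cases hs₁ : s₁ ∈ p.nodes
    · obtain ⟨k, hk, rfl⟩ := List.getElem_of_mem hs₁
      have hky : p.nodes[k] ≠ y := by
        rintro hky
        exact not_transGen_of_childless hy t (hky ▸ hs₁t')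
      exact ih (p.drop k (p.succ_lt_length_of_getElem_ne hk hky))
        (fun h => htp (List.mem_of_mem_drop h)) (hp.drop k)
    · exact ih (p.cons s₁ hs₁ (.inr h.1))
        (by simp [GPath.cons, (hE.ne_of_transGen hs₁t').symm, htp])
        (hp.cons p.head_eq h.1 (hE.asymm h.1) h.2)

theorem exists_intoFirst_activeList_of_union_singleton {t : V} (hty : t ≠ y) {s : V}
    (p : GPath E s y) (hst : s ≠ t) (hreach : TransGen (fun a b => E a b ∧ a ∉ S) s t)
    (hp : ActiveList E (S ∪ {t}) p.nodes) :
    ∃ q : GPath E t y, q.IntoFirst ∧ ActiveList E S q.nodes := by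
  induction hn : p.nodes.length using Nat.strong_induction_on generalizing s with
  | _ n ih =>
  have recurse : ∀ k (hk : k < p.nodes.length), 0 < k → p.nodes[k] ≠ t →
      TransGen (fun a b => E a b ∧ a ∉ S) p.nodes[k] t →
      ∃ q : GPath E t y, q.IntoFirst ∧ ActiveList E S q.nodes := by
    intro k hk hk0 hkt hkreach
    have hky : p.nodes[k] ≠ y := fun h =>
      not_transGen_of_childless hy t (h ▸ TransGen.mono (fun _ _ h => h.1) _ _ hkreach)
    exact ih (n - k) (by omega) (p.drop k (p.succ_lt_length_of_getElem_ne hk hky)) hkt hkreach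
      (hp.drop k) (by simp only [GPath.drop, List.length_drop]; omega)
  -- An interior node that is `t`, or is active only through its descendant `t`, lets us pass to a
  -- shorter suffix of `p` whose first node still reaches `t` outside `S`.
  by_cases hbad : ∃ i, ∃ hi : i + 2 < p.nodes.length,
      p.nodes[i + 1] = t ∨ ¬ ActiveTriple E S p.nodes[i] p.nodes[i + 1] p.nodes[i + 2]
  · obtain ⟨i, hi, hbad⟩ := hbad
    by_cases hvt : p.nodes[i + 1] = t
    · have hzt : E p.nodes[i + 2] t := by
        have hact := hp i hi
        rw [hvt] at hact
        exact (hact.collider_of_mem (.inr rfl)).2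
      have hzy : p.nodes[i + 2] ≠ y := fun h => hy t (h ▸ hzt)
      have hz : p.nodes[i + 2] ∉ S ∪ {t} :=
        (hp (i + 1) (p.succ_lt_length_of_getElem_ne hi hzy)).not_mem_of_not_edge
          (hvt ▸ hE.asymm hzt)
      exact recurse (i + 2) hi (by omega) (fun h => hz (.inr h))
        (.single ⟨hzt, fun h => hz (.inl h)⟩)
    · rcases (hp i hi).of_union_singleton hvt with h | ⟨-, -, hreach'⟩
      · exact absurd h (hbad.resolve_left hvt)
      · exact recurse (i + 1) (by omega) (by omega) hvt hreach'
  · push Not at hbad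
    refine exists_intoFirst_activeList hE hy hreach p ?_ fun i hi => (hbad i hi).2
    intro htp
    obtain ⟨_ | i, hk, hkt⟩ := List.getElem_of_mem htp
    · exact hst (p.getElem_zero.symm.trans hkt)
    · exact (hbad i (p.succ_lt_length_of_getElem_ne hk (by rw [hkt]; exact hty))).1 hkt

end BackDoorPath

end CausalDAG

open CausalDAG in
theorem stmt7_general {V : Type*} (M : SemiMarkov V)
    (hA1 : Assumption1 M)
    (xt : V) (hedge : M.E xt M.t)
    (Z : Set V) (hZ : Z ⊆ M.Xo \ {xt})
    (h : ∃ p : GPath M.E xt M.y, ¬ p.BlockedBy (Z ∪ {M.t})) :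
    (∃ q : GPath M.E M.t M.y, ¬ q.UsesEdge M.t M.y ∧ ¬ q.BlockedBy Z) ∧
      ¬ DSep (fun u v => M.E u v ∧ ¬(u = M.t ∧ v = M.y)) M.t M.y Z ∧
      ¬ BackDoor M.E M.t M.y Z := by
  obtain ⟨p, hp⟩ := h
  have hy : ∀ w, ¬ M.E M.y w := hA1.2.2
  have hxtZ : xt ∉ Z := fun hx => (hZ hx).2 rfl
  have hyZ : M.y ∉ Z := fun hyZ => M.y_notin (.inl (hZ hyZ).1)
  obtain ⟨q, hq, hqZ⟩ := exists_intoFirst_activeList_of_union_singleton M.acyclic hy M.t_ne_y p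
    (M.acyclic.ne_of_transGen (.single hedge)) (.single ⟨hedge, hxtZ⟩)
    ((p.not_blockedBy_iff _).1 hp)
  have hqt : ¬ q.UsesEdge M.t M.y := q.not_usesEdge_of_intoFirst hq hy
  have hqZ' : ¬ q.BlockedBy Z := (q.not_blockedBy_iff Z).2 hqZ
  refine ⟨⟨q, hqt, hqZ'⟩, fun hsep => ?_, fun hbd => hqZ' (hbd.2 q hq)⟩
  exact ((q.toDeleteEdge hqt).not_blockedBy_iff Z).2
    (q.activeList_toDeleteEdge hy hyZ hqt hqZ) (hsep _)

open CausalDAG in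
/-- if there is a path between `x_t` and `y` not blocked by
`Z ∪ {t}`, then there is a path between `t` and `y` not containing the edge
`t → y` that is not blocked by `Z`; equivalently `t` and `y` are not d-separated
by `Z` in `G₋ₜ`, so `Z` does not satisfy the back-door criterion. -/
theorem stmt7 {V : Type*} [Finite V] (M : SemiMarkov V)
    (hA1 : Assumption1 M)
    (xt : V) (hxt : xt ∈ M.Xo) (hedge : M.E xt M.t)
    (Z : Set V) (hZ : Z ⊆ M.Xo \ {xt})
    (h : ∃ p : GPath M.E xt M.y, ¬ p.BlockedBy (Z ∪ {M.t})) :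
    (∃ q : GPath M.E M.t M.y, ¬ q.UsesEdge M.t M.y ∧ ¬ q.BlockedBy Z) ∧
      ¬ DSep (fun u v => M.E u v ∧ ¬(u = M.t ∧ v = M.y)) M.t M.y Z ∧
      ¬ BackDoor M.E M.t M.y Z :=
  stmt7_general M hA1 xt hedge Z hZ h
end

section
/- Let G be a finite DAG containing distinct nodes x_t, t and y, and let G_e be obtained from G by adding a single new node e whose parents are exactly {x_t} or exactly {x_t, t} (and e has no children). Let S be a set of nodes of G with t ∈ S and x_t ∉ S. If e and y are not d-separated by S in G_e, then there exists a path between x_t and y in G that is not blocked by S. -/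
theorem List.map_some_reduceOption {α : Type*} {l : List (Option α)} (h : none ∉ l) :
    l.reduceOption.map some = l := by
  induction l with
  | nil => rfl
  | cons x l ih =>
    obtain ⟨x, rfl⟩ := Option.ne_none_iff_exists'.mp fun hx => h (hx ▸ List.mem_cons_self)
    rw [List.reduceOption_cons_of_some, List.map_cons, ih fun hl => h (List.mem_cons_of_mem _ hl)]

namespace CausalDAG

variable {V : Type*}

section SubEdge

variable {E : V → V → Prop} {xt : V} {V0 : Set V}

theorem not_subEdge_none (w : Option V) : ¬ subEdge E xt V0 none w := id

theorem adj_subEdge_none {w : Option V} (h : Adj (subEdge E xt V0) none w) :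
    ∃ u, w = some u ∧ (u = xt ∨ u ∈ V0) := by
  rcases h with h | h
  · exact absurd h (not_subEdge_none w)
  · cases w with
    | none => exact absurd h (not_subEdge_none none)
    | some u => exact ⟨u, rfl, h⟩

theorem Descendant.of_subEdge {v d : V} (h : Descendant (subEdge E xt V0) (some v) (some d)) :
    Descendant E v d := by
  suffices ∀ w, Relation.TransGen (subEdge E xt V0) (some v) w →
      ∀ d, w = some d → Relation.TransGen E v d from this _ h d rfl
  intro w hw
  induction hw with
  | single hvw => rintro d rfl; exact .single hvw
  | @tail b c _ hbc ih =>
    rintro d rfl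
    cases b with
    | none => exact absurd hbc (not_subEdge_none _)
    | some b => exact (ih b rfl).tail hbc

end SubEdge

namespace GPath

variable {E : V → V → Prop} {a b c : V} {S : Set V}

theorem getElem?_zero (p : GPath E a b) : p.nodes[0]? = some a :=
  List.head?_eq_getElem? ▸ p.head_eq

theorem adj_second (p : GPath E a b) (hc : p.nodes[1]? = some c) : Adj E a c := by
  obtain ⟨h1, hc⟩ := List.getElem?_eq_some_iff.mp hc
  obtain ⟨_, ha⟩ := List.getElem?_eq_some_iff.mp p.getElem?_zero
  exact ha ▸ hc ▸ p.chain.getElem 0 h1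

theorem three_le_length (p : GPath E a b) (hc : p.nodes[1]? = some c) (hcb : c ≠ b) :
    3 ≤ p.nodes.length := by
  by_contra! hlen
  have hlast := p.last_eq
  rw [List.getLast?_eq_getElem?, show p.nodes.length - 1 = 1 by have := p.two_le; omega, hc]
    at hlast
  exact hcb (Option.some.inj hlast)

theorem blockedBy_of_second_mem (p : GPath E a b) (hc : p.nodes[1]? = some c) (hcb : c ≠ b)
    (hac : ¬ E a c) (hcS : c ∈ S) : p.BlockedBy S := by
  refine ⟨1, c, ⟨one_pos, p.three_le_length hc hcb⟩, hc, Or.inl ⟨?_, hcS⟩⟩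
  rintro ⟨x, v, z, hx, hv, -, hxv, -⟩
  rw [Nat.sub_self, p.getElem?_zero, Option.some.injEq] at hx
  rw [hc, Option.some.injEq] at hv
  exact hac (hx ▸ hv ▸ hxv)

def dropFirst (p : GPath E a b) (hc : p.nodes[1]? = some c) (hcb : c ≠ b) : GPath E c b where
  nodes := p.nodes.tail
  nodup := p.nodup.sublist (List.tail_sublist _)
  two_le := by have := p.three_le_length hc hcb; simp only [List.length_tail]; omega
  head_eq := List.head?_tail ▸ hc
  last_eq := by
    have := p.two_le
    rw [List.getLast?_tail, if_neg (by omega), p.last_eq]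
  chain := p.chain.tail

theorem first_notMem_dropFirst (p : GPath E a b) (hc : p.nodes[1]? = some c) (hcb : c ≠ b) :
    a ∉ (p.dropFirst hc hcb).nodes := by
  have hnodup := p.nodup
  obtain ⟨l, hl⟩ := List.head?_eq_some_iff.mp p.head_eq
  rw [hl, List.nodup_cons] at hnodup
  simpa [dropFirst, hl] using hnodup.1

theorem colliderAt_dropFirst_iff (p : GPath E a b) (hc : p.nodes[1]? = some c) (hcb : c ≠ b)
    {i : ℕ} (hi : 0 < i) : (p.dropFirst hc hcb).ColliderAt i ↔ p.ColliderAt (i + 1) := by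
  simp only [ColliderAt, dropFirst, List.getElem?_tail, Nat.sub_add_cancel hi, Nat.add_sub_cancel]

theorem BlockedBy.of_dropFirst {p : GPath E a b} {hc : p.nodes[1]? = some c} {hcb : c ≠ b}
    (h : (p.dropFirst hc hcb).BlockedBy S) : p.BlockedBy S := by
  obtain ⟨i, v, ⟨hi0, hilen⟩, hv, hblock⟩ := h
  refine ⟨i + 1, v, ⟨i.succ_pos, ?_⟩, List.getElem?_tail ▸ hv, ?_⟩
  · simp only [dropFirst, List.length_tail] at hilen; omega
  · rwa [← p.colliderAt_dropFirst_iff hc hcb hi0]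

section Restrict

variable {xt : V} {V0 : Set V}

def restrict (q : GPath (subEdge E xt V0) (some a) (some b)) (hq : none ∉ q.nodes) :
    GPath E a b where
  nodes := q.nodes.reduceOption
  nodup := by
    have := q.nodup
    rwa [← List.map_some_reduceOption hq, List.nodup_map_iff (Option.some_injective V)] at this
  two_le := by
    have := q.two_le
    rwa [← List.map_some_reduceOption hq, List.length_map] at this
  head_eq := by
    have := q.head_eq
    rw [← List.map_some_reduceOption hq, List.head?_map] at this
    simpa using this
  last_eq := by
    have := q.last_eq
    rw [← List.map_some_reduceOption hq, List.getLast?_map] at this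
    simpa using this
  chain := by
    have := q.chain
    rw [← List.map_some_reduceOption hq] at this
    exact (List.isChain_map some).mp this

theorem getElem?_restrict (q : GPath (subEdge E xt V0) (some a) (some b)) (hq : none ∉ q.nodes)
    (i : ℕ) : q.nodes[i]? = (q.restrict hq).nodes[i]?.map some := by
  rw [← List.getElem?_map, restrict, List.map_some_reduceOption hq]

theorem length_restrict (q : GPath (subEdge E xt V0) (some a) (some b)) (hq : none ∉ q.nodes) :
    (q.restrict hq).nodes.length = q.nodes.length := by
  rw [← List.length_map some, restrict, List.map_some_reduceOption hq]

theorem colliderAt_restrict_iff (q : GPath (subEdge E xt V0) (some a) (some b))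
    (hq : none ∉ q.nodes) {i : ℕ} : (q.restrict hq).ColliderAt i ↔ q.ColliderAt i := by
  simp only [ColliderAt, getElem?_restrict q hq]
  constructor
  · rintro ⟨x, v, z, hx, hv, hz, hxv, hzv⟩
    exact ⟨x, v, z, by simp [hx], by simp [hv], by simp [hz], hxv, hzv⟩
  · rintro ⟨x, v, z, hx, hv, hz, hxv, hzv⟩
    obtain ⟨x, hx', rfl⟩ := Option.map_eq_some_iff.mp hx
    obtain ⟨v, hv', rfl⟩ := Option.map_eq_some_iff.mp hv
    obtain ⟨z, hz', rfl⟩ := Option.map_eq_some_iff.mp hz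
    exact ⟨x, v, z, hx', hv', hz', hxv, hzv⟩

theorem BlockedBy.of_restrict {q : GPath (subEdge E xt V0) (some a) (some b)}
    {hq : none ∉ q.nodes} (h : (q.restrict hq).BlockedBy S) : q.BlockedBy (some '' S) := by
  obtain ⟨i, v, hi, hv, hblock⟩ := h
  refine ⟨i, some v, ?_, by rw [getElem?_restrict q hq, hv]; rfl, ?_⟩
  · simpa only [Interior, length_restrict] using hi
  · rw [← q.colliderAt_restrict_iff hq, (Option.some_injective V).mem_set_image]
    refine hblock.imp_right fun ⟨hcol, hvS, hdesc⟩ => ⟨hcol, hvS, ?_⟩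
    rintro w hw ⟨d, hdS, rfl⟩
    exact hdesc d (Descendant.of_subEdge hw) hdS

end Restrict

end GPath

end CausalDAG

open CausalDAG in
theorem stmt12_general {V : Type*} (E : V → V → Prop)
    (xt t y : V) (hxt_y : xt ≠ y) (ht_y : t ≠ y)
    (V0 : Set V) (hV0 : V0 ⊆ ({t} : Set V))
    (S : Set V) (htS : t ∈ S)
    (h : ¬ DSep (subEdge E xt V0) (none : Option V) (some y) (some '' S)) :
    ∃ P : GPath E xt y, ¬ P.BlockedBy S := by
  obtain ⟨p, hp⟩ := not_forall.mp h
  obtain ⟨w, hw⟩ : ∃ w, p.nodes[1]? = some w := ⟨_, List.getElem?_eq_getElem p.two_le⟩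
  obtain ⟨u, rfl, rfl | hu⟩ := adj_subEdge_none (p.adj_second hw)
  · have hne : some u ≠ some y := by simpa using hxt_y
    refine ⟨(p.dropFirst hw hne).restrict (p.first_notMem_dropFirst hw hne), fun hP => hp ?_⟩
    exact hP.of_restrict.of_dropFirst
  · obtain rfl : u = t := hV0 hu
    exact (hp (p.blockedBy_of_second_mem hw (by simpa using ht_y) (not_subEdge_none _)
      ⟨u, htS, rfl⟩)).elim

open CausalDAG in
/-- if `e` and `y` are not d-separated by `S` in the sub-sampled
graph (where `e`'s parents are exactly `{x_t}` or `{x_t, t}`), `t ∈ S` and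
`x_t ∉ S`, then there is a path between `x_t` and `y` in `G` not blocked by `S`. -/
theorem stmt12 {V : Type*} [Finite V] (E : V → V → Prop) (hac : Acyclic E)
    (xt t y : V) (hxt_t : xt ≠ t) (hxt_y : xt ≠ y) (ht_y : t ≠ y)
    (V0 : Set V) (hV0 : V0 ⊆ ({t} : Set V))
    (S : Set V) (htS : t ∈ S) (hxtS : xt ∉ S)
    (h : ¬ DSep (subEdge E xt V0) (none : Option V) (some y) (some '' S)) :
    ∃ P : GPath E xt y, ¬ P.BlockedBy S :=
  stmt12_general E xt t y hxt_y ht_y V0 hV0 S htS h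
end
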